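/- Let 0 < a < b and α > 0 be real numbers and set σ = b/a. Then the critical viscosity μ_c = aα(1 + 3σ⁴ − 4σ² − 4σ⁴ ln σ)/(2(σ⁴ − 1 − 4σ⁴ ln σ)) is strictly positive. -/

import Mathlib

/-!
Both numerator and denominator of `μ_c` are negative for `σ > 1`. With `x = σ⁴` the denominator
is `x - 1 - x log x`, and with `y = σ²` the numerator is `1 - 4y + 3y² - 2y² log y`. Both are
controlled by the lower bound `log y ≥ 2(y - 1)/(y + 1)` for `y ≥ 1`, which bounds them above by
`-(x - 1)²/(x + 1)` and `-(y - 1)³/(y + 1)` respectively.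
-/

open Real

/-- The series `log y = 2 artanh ((y - 1)/(y + 1))` truncated after its first term; all its terms are nonnegative for `y ≥ 1`. -/
lemma two_mul_sub_one_div_add_one_le_log {y : ℝ} (hy : 1 ≤ y) :
    2 * (y - 1) / (y + 1) ≤ log y := by
  have hy1 : 0 < y + 1 := by linarith
  have hbound := sum_range_le_log_div (x := (y - 1) / (y + 1)) (by positivity)
    ((div_lt_one hy1).mpr (by linarith)) 1
  have hquot : (1 + (y - 1) / (y + 1)) / (1 - (y - 1) / (y + 1)) = y := by
    field_simp
    ring
  rw [hquot] at hbound
  norm_num at hbound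
  rw [mul_div_assoc]
  linarith

lemma sub_one_lt_mul_log {x : ℝ} (hx : 1 < x) : x - 1 < x * log x := by
  have hlog := two_mul_sub_one_div_add_one_le_log hx.le
  have hx1 : 0 < x + 1 := by linarith
  have hmul : 2 * x * (x - 1) / (x + 1) ≤ x * log x :=
    calc 2 * x * (x - 1) / (x + 1) = x * (2 * (x - 1) / (x + 1)) := by ring
      _ ≤ x * log x := mul_le_mul_of_nonneg_left hlog (by linarith)
  have hgap : x - 1 < 2 * x * (x - 1) / (x + 1) := by
    rw [lt_div_iff₀ hx1]
    nlinarith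
  linarith

lemma three_mul_sq_sub_four_mul_add_one_lt_two_mul_sq_mul_log {y : ℝ} (hy : 1 < y) :
    3 * y ^ 2 - 4 * y + 1 < 2 * y ^ 2 * log y := by
  have hlog := two_mul_sub_one_div_add_one_le_log hy.le
  have hy1 : 0 < y + 1 := by linarith
  have hmul : 4 * y ^ 2 * (y - 1) / (y + 1) ≤ 2 * y ^ 2 * log y :=
    calc 4 * y ^ 2 * (y - 1) / (y + 1) = 2 * y ^ 2 * (2 * (y - 1) / (y + 1)) := by ring
      _ ≤ 2 * y ^ 2 * log y := mul_le_mul_of_nonneg_left hlog (by positivity)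
  have hgap : 3 * y ^ 2 - 4 * y + 1 < 4 * y ^ 2 * (y - 1) / (y + 1) := by
    rw [lt_div_iff₀ hy1]
    nlinarith [pow_pos (sub_pos.mpr hy) 3]
  linarith

theorem critical_viscosity_pos (a b α : ℝ) (ha : 0 < a) (hab : a < b) (hα : 0 < α) :
    0 < a * α * (1 + 3 * (b / a) ^ 4 - 4 * (b / a) ^ 2 - 4 * (b / a) ^ 4 * Real.log (b / a)) /
        (2 * ((b / a) ^ 4 - 1 - 4 * (b / a) ^ 4 * Real.log (b / a))) := by
  set σ := b / a
  have hσ : 1 < σ := (one_lt_div ha).mpr hab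
  have hden : σ ^ 4 - 1 - 4 * σ ^ 4 * log σ < 0 := by
    have := sub_one_lt_mul_log (one_lt_pow₀ hσ (n := 4) (by norm_num))
    rw [log_pow] at this
    push_cast at this
    linarith
  have hnum : 1 + 3 * σ ^ 4 - 4 * σ ^ 2 - 4 * σ ^ 4 * log σ < 0 := by
    have := three_mul_sq_sub_four_mul_add_one_lt_two_mul_sq_mul_log
      (one_lt_pow₀ hσ (n := 2) (by norm_num))
    rw [log_pow] at this
    push_cast at this
    linarith
  apply div_pos_of_neg_of_neg
  · exact mul_neg_of_pos_of_neg (mul_pos ha hα) hnum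
  · linarith
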